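/- Let E be a finite-dimensional real vector space and P : [0,1] → Hom(E*, E) a continuous map into the space of linear maps from E* to E. Define V_P = { (λ,φ) ∈ W(E) : λ(u) = λ(0) − ∫₀ᵘ P(s)(φ(s)) ds for all u ∈ [0,1] }. Then a pair (λ̃, φ̃) ∈ W(E) belongs to V_P^⊥ if and only if ∫₀¹ φ̃(s) ds = 0 and, for every u ∈ [0,1] and every α ∈ E*, α(λ̃(u)) + (∫ᵤ¹ φ̃(s) ds)(P(u)(α)) = 0. -/

import Mathlib

/-!
For `v = (λ, φ) ∈ V_P` and `w̃ = (λ̃, φ̃)`, substituting `λ(u) = λ(0) - ∫₀ᵘ P φ` into `Ω(v, w̃)`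
and integrating by parts gives `Ω(v, w̃) = ∫₀¹ r(u)(φ(u)) du - (∫₀¹ φ̃)(λ(0))`, where
`r(u)(α) = α(λ̃(u)) + (∫ᵤ¹ φ̃)(P(u) α)` is `WPair.adjointResidual`. Since `λ(0)` and `φ` can be prescribed freely in `V_P`,
this vanishes for all `v` iff `∫₀¹ φ̃ = 0` and `r ≡ 0`: taking `λ(0) = 0` and
`φ = r(·)(α) • α` gives `∫₀¹ r(u)(α)² du = 0`.
-/

open MeasureTheory Set intervalIntegral Topology

/-- An element of `W(E)`: a pair `(λ, φ)` of continuous maps on `[0,1]` with values in `E`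
and in the dual `E* = E →L[ℝ] ℝ` respectively. -/
structure WPair (E : Type*) [NormedAddCommGroup E] [NormedSpace ℝ E] where
  lam : ℝ → E
  phi : ℝ → E →L[ℝ] ℝ
  lam_cont : ContinuousOn lam (Icc 0 1)
  phi_cont : ContinuousOn phi (Icc 0 1)

/-- The alternating bilinear form `Ω((λ,φ),(λ',φ')) = ∫₀¹ (φ(u)(λ'(u)) − φ'(u)(λ(u))) du`. -/
noncomputable def Omega {E : Type*} [NormedAddCommGroup E] [NormedSpace ℝ E]
    (w w' : WPair E) : ℝ :=
  ∫ u in (0:ℝ)..(1:ℝ), (w.phi u (w'.lam u) - w'.phi u (w.lam u))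

/-- The `Ω`-orthogonal of a subset of `W(E)`. -/
def orth {E : Type*} [NormedAddCommGroup E] [NormedSpace ℝ E] (A : Set (WPair E)) :
    Set (WPair E) :=
  {w | ∀ a ∈ A, Omega a w = 0}

section Primitive

variable {F : Type*} [NormedAddCommGroup F] [NormedSpace ℝ F] {a b : ℝ} {f : ℝ → F}

lemma continuousOn_primitive_Icc (hab : a ≤ b) (hf : ContinuousOn f (Icc a b)) :
    ContinuousOn (fun u => ∫ s in a..u, f s) (Icc a b) := by
  have hint : IntegrableOn f (uIcc a b) := by rw [uIcc_of_le hab]; exact hf.integrableOn_Icc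
  simpa only [uIcc_of_le hab] using continuousOn_primitive_interval hint

lemma continuousOn_primitive_left_Icc (hab : a ≤ b) (hf : ContinuousOn f (Icc a b)) :
    ContinuousOn (fun u => ∫ s in u..b, f s) (Icc a b) := by
  have hint : IntegrableOn f (uIcc a b) := by rw [uIcc_of_le hab]; exact hf.integrableOn_Icc
  simpa only [uIcc_of_le hab] using continuousOn_primitive_interval_left hint

end Primitive

section IntegrationByParts

variable {F G : Type*} [NormedAddCommGroup F] [NormedSpace ℝ F] [CompleteSpace F]
  [NormedAddCommGroup G] [NormedSpace ℝ G] [CompleteSpace G]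

/- Fubini on the triangle `a ≤ s ≤ u ≤ b`, proved by differentiating
`u ↦ (∫ᵤᵇ f)(∫ₐᵘ g)`, which vanishes at both ends. -/
theorem integral_apply_integral_eq_integral_integral_apply {a b : ℝ} (hab : a ≤ b)
    {f : ℝ → F →L[ℝ] G} {g : ℝ → F} (hf : ContinuousOn f (Icc a b))
    (hg : ContinuousOn g (Icc a b)) :
    ∫ u in a..b, f u (∫ s in a..u, g s) = ∫ u in a..b, (∫ s in u..b, f s) (g u) := by
  set Φ : ℝ → F →L[ℝ] G := fun u => ∫ s in u..b, f s
  set Γ : ℝ → F := fun u => ∫ s in a..u, g s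
  have hΦ : ContinuousOn Φ (Icc a b) := continuousOn_primitive_left_Icc hab hf
  have hΓ : ContinuousOn Γ (Icc a b) := continuousOn_primitive_Icc hab hg
  have hderiv : ∀ x ∈ Ioo a b,
      HasDerivAt (fun u => Φ u (Γ u)) ((-f x) (Γ x) + Φ x (g x)) x := by
    intro x hx
    have hx' : x ∈ uIcc a b := Ioo_subset_Icc_self.trans Icc_subset_uIcc hx
    have hnhds : Icc a b ∈ 𝓝 x := Icc_mem_nhds hx.1 hx.2
    exact (integral_hasDerivAt_left
        ((hf.intervalIntegrable_of_Icc hab).mono_set (uIcc_subset_uIcc_right hx'))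
        ((hf.mono Ioo_subset_Icc_self).stronglyMeasurableAtFilter isOpen_Ioo x hx)
        (hf.continuousAt hnhds)).clm_apply
      (integral_hasDerivAt_right
        ((hg.intervalIntegrable_of_Icc hab).mono_set (uIcc_subset_uIcc_left hx'))
        ((hg.mono Ioo_subset_Icc_self).stronglyMeasurableAtFilter isOpen_Ioo x hx)
        (hg.continuousAt hnhds))
  have hint₁ : IntervalIntegrable (fun u => f u (Γ u)) volume a b :=
    (hf.clm_apply hΓ).intervalIntegrable_of_Icc hab
  have hint₂ : IntervalIntegrable (fun u => Φ u (g u)) volume a b :=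
    (hΦ.clm_apply hg).intervalIntegrable_of_Icc hab
  have hFTC := integral_eq_sub_of_hasDerivAt_of_le hab (hΦ.clm_apply hΓ) hderiv
    (hint₁.neg.add hint₂)
  have hΦb : Φ b = 0 := integral_same
  have hΓa : Γ a = 0 := integral_same
  simp only [hΦb, hΓa, neg_apply, map_zero, zero_apply, sub_zero] at hFTC
  rw [eq_comm, ← sub_eq_zero, ← integral_sub hint₂ hint₁]
  simpa only [neg_add_eq_sub] using hFTC

end IntegrationByParts

lemma eqOn_zero_of_integral_sq_eq_zero {f : ℝ → ℝ} {a b : ℝ} (hab : a < b)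
    (hf : ContinuousOn f (Icc a b)) (h : ∫ u in a..b, f u ^ 2 = 0) : EqOn f 0 (Icc a b) := by
  intro u hu
  by_contra hne
  exact (integral_pos hab (hf.pow 2) (fun x _ => sq_nonneg _)
    ⟨u, hu, sq_pos_of_ne_zero hne⟩).ne' h

namespace WPair

variable {E : Type*} [NormedAddCommGroup E] [NormedSpace ℝ E]

/-- The space `V_P` of solutions of `dλ + P^♯φ = 0`. -/
def solutions (P : ℝ → (E →L[ℝ] ℝ) →L[ℝ] E) : Set (WPair E) :=
  {v | ∀ u ∈ Icc (0:ℝ) 1, v.lam u = v.lam 0 - ∫ s in (0:ℝ)..u, P s (v.phi s)}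

def const (x : E) : WPair E := ⟨fun _ => x, 0, continuousOn_const, continuousOn_const⟩

lemma const_mem_solutions (P : ℝ → (E →L[ℝ] ℝ) →L[ℝ] E) (x : E) : const x ∈ solutions P := by
  intro u _
  simp [const]

noncomputable def solutionOfPhi {P : ℝ → (E →L[ℝ] ℝ) →L[ℝ] E}
    (hP : ContinuousOn P (Icc 0 1)) (ψ : ℝ → E →L[ℝ] ℝ) (hψ : ContinuousOn ψ (Icc 0 1)) :
    WPair E where
  lam u := -∫ s in (0:ℝ)..u, P s (ψ s)
  phi := ψ
  lam_cont := (continuousOn_primitive_Icc zero_le_one (hP.clm_apply hψ)).neg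
  phi_cont := hψ

lemma solutionOfPhi_mem_solutions {P : ℝ → (E →L[ℝ] ℝ) →L[ℝ] E}
    (hP : ContinuousOn P (Icc 0 1)) (ψ : ℝ → E →L[ℝ] ℝ) (hψ : ContinuousOn ψ (Icc 0 1)) :
    solutionOfPhi hP ψ hψ ∈ solutions P := by
  intro u _
  simp [solutionOfPhi]

noncomputable def adjointResidual (P : ℝ → (E →L[ℝ] ℝ) →L[ℝ] E) (w : WPair E) (u : ℝ) :
    (E →L[ℝ] ℝ) →L[ℝ] ℝ :=
  ContinuousLinearMap.apply ℝ ℝ (w.lam u) + (∫ s in u..(1:ℝ), w.phi s).comp (P u)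

lemma adjointResidual_apply (P : ℝ → (E →L[ℝ] ℝ) →L[ℝ] E) (w : WPair E) (u : ℝ)
    (α : E →L[ℝ] ℝ) :
    w.adjointResidual P u α = α (w.lam u) + (∫ s in u..(1:ℝ), w.phi s) (P u α) :=
  rfl

lemma continuousOn_adjointResidual {P : ℝ → (E →L[ℝ] ℝ) →L[ℝ] E}
    (hP : ContinuousOn P (Icc 0 1)) (w : WPair E) :
    ContinuousOn (w.adjointResidual P) (Icc 0 1) := by
  have hΦ := continuousOn_primitive_left_Icc zero_le_one w.phi_cont
  exact ((ContinuousLinearMap.apply ℝ ℝ).continuous.comp_continuousOn w.lam_cont).add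
    (hΦ.clm_comp hP)

variable [CompleteSpace E] {P : ℝ → (E →L[ℝ] ℝ) →L[ℝ] E}

theorem omega_eq_of_mem_solutions (hP : ContinuousOn P (Icc 0 1)) {v : WPair E}
    (hv : v ∈ solutions P) (w : WPair E) :
    Omega v w = (∫ u in (0:ℝ)..1, w.adjointResidual P u (v.phi u)) -
      (∫ s in (0:ℝ)..1, w.phi s) (v.lam 0) := by
  have hint : ∀ {f : ℝ → ℝ}, ContinuousOn f (Icc 0 1) → IntervalIntegrable f volume 0 1 :=
    fun hf => hf.intervalIntegrable_of_Icc zero_le_one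
  have hPv : ContinuousOn (fun s => P s (v.phi s)) (Icc 0 1) := hP.clm_apply v.phi_cont
  have hΦ := continuousOn_primitive_left_Icc zero_le_one w.phi_cont
  have hΓ := continuousOn_primitive_Icc zero_le_one hPv
  have h₁ := hint (v.phi_cont.clm_apply w.lam_cont)
  have h₂ := hint (w.phi_cont.clm_apply (continuousOn_const (c := v.lam 0)))
  have h₃ := hint (w.phi_cont.clm_apply hΓ)
  have h₄ := hint (hΦ.clm_apply hPv)
  calc Omega v w
      = ∫ u in (0:ℝ)..1, (v.phi u (w.lam u) - w.phi u (v.lam 0)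
          + w.phi u (∫ s in (0:ℝ)..u, P s (v.phi s))) := by
        refine integral_congr fun u hu => ?_
        rw [uIcc_of_le zero_le_one] at hu
        simp only [hv u hu, map_sub]
        abel
    _ = (∫ u in (0:ℝ)..1, v.phi u (w.lam u)) - (∫ u in (0:ℝ)..1, w.phi u (v.lam 0))
          + ∫ u in (0:ℝ)..1, (∫ s in u..(1:ℝ), w.phi s) (P u (v.phi u)) := by
        rw [integral_add (h₁.sub h₂) h₃, integral_sub h₁ h₂,
          integral_apply_integral_eq_integral_integral_apply zero_le_one w.phi_cont hPv]
    _ = _ := by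
        simp only [adjointResidual_apply]
        rw [ContinuousLinearMap.intervalIntegral_apply
          (w.phi_cont.intervalIntegrable_of_Icc zero_le_one), integral_add h₁ h₄]
        abel

lemma integral_phi_eq_zero_of_mem_orth (hP : ContinuousOn P (Icc 0 1)) {w : WPair E}
    (hw : w ∈ orth (solutions P)) : ∫ s in (0:ℝ)..1, w.phi s = 0 := by
  ext x
  have h := hw _ (const_mem_solutions P x)
  rw [omega_eq_of_mem_solutions hP (const_mem_solutions P x)] at h
  simpa [const] using h

lemma adjointResidual_eq_zero_of_mem_orth (hP : ContinuousOn P (Icc 0 1)) {w : WPair E}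
    (hw : w ∈ orth (solutions P)) {u : ℝ} (hu : u ∈ Icc (0:ℝ) 1) (α : E →L[ℝ] ℝ) :
    w.adjointResidual P u α = 0 := by
  set c : ℝ → ℝ := fun u => w.adjointResidual P u α
  have hc : ContinuousOn c (Icc 0 1) :=
    (continuousOn_adjointResidual hP w).clm_apply continuousOn_const
  have hv := solutionOfPhi_mem_solutions hP (fun u => c u • α) (hc.smul continuousOn_const)
  have h := hw _ hv
  rw [omega_eq_of_mem_solutions hP hv] at h
  simp only [solutionOfPhi, integral_same, neg_zero, map_zero, sub_zero, map_smul,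
    smul_eq_mul] at h
  exact eqOn_zero_of_integral_sq_eq_zero zero_lt_one hc (by simpa only [sq] using h) hu

end WPair

theorem orth_solutions_characterization
    (E : Type*) [NormedAddCommGroup E] [NormedSpace ℝ E] [FiniteDimensional ℝ E]
    (P : ℝ → (E →L[ℝ] ℝ) →L[ℝ] E) (hP : ContinuousOn P (Icc 0 1))
    (w : WPair E) :
    w ∈ orth {v : WPair E |
        ∀ u ∈ Icc (0:ℝ) 1, v.lam u = v.lam 0 - ∫ s in (0:ℝ)..u, P s (v.phi s)} ↔
      (∫ s in (0:ℝ)..(1:ℝ), w.phi s) = 0 ∧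
        ∀ u ∈ Icc (0:ℝ) 1, ∀ α : E →L[ℝ] ℝ,
          α (w.lam u) + (∫ s in u..(1:ℝ), w.phi s) (P u α) = 0 := by
  change w ∈ orth (WPair.solutions P) ↔ _
  refine ⟨fun hw => ⟨WPair.integral_phi_eq_zero_of_mem_orth hP hw,
    fun u hu α => WPair.adjointResidual_eq_zero_of_mem_orth hP hw hu α⟩, ?_⟩
  rintro ⟨hφ, hres⟩ v hv
  rw [WPair.omega_eq_of_mem_solutions hP hv, hφ, zero_apply, sub_zero]
  refine (integral_congr fun u hu => ?_).trans integral_zero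
  rw [uIcc_of_le zero_le_one] at hu
  exact hres u hu (v.phi u)
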